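/- Define S_{N,r}(x,y) = 4(r−2)(N+r)x + (r−2)(r−3)x² − (N+r)(7r−17−N)y. Let r ≥ 3 and let N be an integer with 2 ≤ N ≤ 4(r − 9/8)². Then for every one-loop fixed point λ on ℝ^N one has S_{N,r}(a₀(λ), ‖λ‖²) ≤ S_{N,r}(ρ_N⁺, 3N(N+2)/(N+8)²), where ρ_N⁺ = N(N+2)/(N+8); i.e. the average of the squared one-loop anomalous dimensions of rank-r composite operators is maximized by the O(N) fixed point. -/

import Mathlib

/-- A quartic coupling on `ℝ^N`: a rank-4 tensor invariant under all
permutations of its four indices. -/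
def IsSym4 {N : ℕ} (A : (Fin 4 → Fin N) → ℝ) : Prop :=
  ∀ (σ : Equiv.Perm (Fin 4)) (f : Fin 4 → Fin N), A (f ∘ σ) = A f

/-- The one-loop fixed point equation
`λ_{ijkl} = ∑_{m,n} (λ_{ijmn}λ_{klmn} + λ_{ikmn}λ_{jlmn} + λ_{ilmn}λ_{jkmn})`. -/
def IsFixedPoint {N : ℕ} (A : (Fin 4 → Fin N) → ℝ) : Prop :=
  ∀ i j k l : Fin N, A ![i, j, k, l] =
    ∑ m : Fin N, ∑ n : Fin N,
      (A ![i, j, m, n] * A ![k, l, m, n] + A ![i, k, m, n] * A ![j, l, m, n]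
        + A ![i, l, m, n] * A ![j, k, m, n])

/-- `‖λ‖² = ∑_{i,j,k,l} λ_{ijkl}²`. -/
def sqnorm {N : ℕ} (A : (Fin 4 → Fin N) → ℝ) : ℝ :=
  ∑ i : Fin N, ∑ j : Fin N, ∑ k : Fin N, ∑ l : Fin N, (A ![i, j, k, l]) ^ 2

/-- `a₀(λ) = ∑_{i,j} λ_{iijj}`. -/
def a0 {N : ℕ} (A : (Fin 4 → Fin N) → ℝ) : ℝ :=
  ∑ i : Fin N, ∑ j : Fin N, A ![i, i, j, j]

/-- `t_{ij}(λ) = ∑_k λ_{ijkk}`. -/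
def tmat {N : ℕ} (A : (Fin 4 → Fin N) → ℝ) (i j : Fin N) : ℝ :=
  ∑ k : Fin N, A ![i, j, k, k]

/-- `S_{N,r}(x,y) = 4(r−2)(N+r)x + (r−2)(r−3)x² − (N+r)(7r−17−N)y`. -/
def Sfun (N r : ℕ) (x y : ℝ) : ℝ :=
  4 * ((r : ℝ) - 2) * ((N : ℝ) + r) * x + ((r : ℝ) - 2) * ((r : ℝ) - 3) * x ^ 2
    - ((N : ℝ) + r) * (7 * (r : ℝ) - 17 - (N : ℝ)) * y

/-!
Put `t_{ij} = ∑_k λ_{ijkk}`, so that `a₀ = tr t`. Contracting the fixed point equation gives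
`a₀ = ‖t‖² + 2‖λ‖²`, Cauchy–Schwarz gives `a₀² ≤ N‖t‖²`, and expanding `‖(N+2)λ − P‖² ≥ 0` for
`P_{ijkl} = δ_{ij}t_{kl} + δ_{ik}t_{jl} + δ_{il}t_{jk}` gives `3‖t‖² ≤ (N+2)‖λ‖²`. Eliminating
`‖t‖²`, the point `(a₀, ‖λ‖²)` lies between the line `y = 3x/(N+8)` and the parabola
`y = (Nx − x²)/(2N)`, which meet at the `O(N)` point. Since `S_{N,r}` is affine in `y`, it is
bounded by its value on the line or on the parabola, according to the sign of `N + 17 − 7r`. On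
either curve it is largest at the `O(N)` point; on the parabola because its slope there is a
positive multiple of a cubic in `N` that `N ≤ 4(r − 9/8)²` makes nonnegative.
-/

open Finset

section DeltaSymm
variable {ι : Type*} [Fintype ι] [DecidableEq ι]

def deltaSymm (T : ι → ι → ℝ) (i j k l : ι) : ℝ :=
  (if i = j then T k l else 0) + (if i = k then T j l else 0) + (if i = l then T j k else 0)

theorem sum_deltaSymm_sq {T : ι → ι → ℝ} (hT : ∀ i j, T i j = T j i) :
    ∑ i, ∑ j, ∑ k, ∑ l, deltaSymm T i j k l ^ 2 =
      3 * (Fintype.card ι + 2) * ∑ i, ∑ j, T i j ^ 2 := by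
  simp only [deltaSymm, sq, add_mul, mul_add, ite_mul, mul_ite, zero_mul, mul_zero,
    sum_add_distrib, sum_ite_irrel, sum_const_zero, sum_ite_eq, mem_univ, if_true]
  rw [sum_comm (f := fun i j => T j i * T j i)]
  simp only [hT _ _, sum_const, card_univ, nsmul_eq_mul]
  ring

end DeltaSymm

namespace IsSym4
variable {N : ℕ} {A : (Fin 4 → Fin N) → ℝ}

theorem apply_eq (hA : IsSym4 A) (σ : Equiv.Perm (Fin 4)) {f g : Fin 4 → Fin N}
    (h : ∀ i, g (σ i) = f i) : A f = A g := by
  rw [← hA σ g]; congr 1; funext i; exact (h i).symm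

theorem tmat_comm (hA : IsSym4 A) (k l : Fin N) : tmat A k l = tmat A l k :=
  sum_congr rfl fun i _ => hA.apply_eq (Equiv.swap 0 1) (by intro i; fin_cases i <;> rfl)

theorem sum_apply_eq_tmat₀₁ (hA : IsSym4 A) (k l : Fin N) : ∑ i, A ![i, i, k, l] = tmat A k l :=
  sum_congr rfl fun i _ =>
    hA.apply_eq (Equiv.swap 0 2 * Equiv.swap 1 3) (by intro i; fin_cases i <;> rfl)

theorem sum_apply_eq_tmat₀₂ (hA : IsSym4 A) (k l : Fin N) : ∑ i, A ![i, k, i, l] = tmat A k l :=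
  sum_congr rfl fun i _ =>
    hA.apply_eq (Equiv.swap 0 2 * Equiv.swap 1 3 * Equiv.swap 1 2) (by intro i; fin_cases i <;> rfl)

theorem sum_apply_eq_tmat₀₃ (hA : IsSym4 A) (k l : Fin N) : ∑ i, A ![i, k, l, i] = tmat A k l :=
  sum_congr rfl fun i _ =>
    hA.apply_eq (Equiv.swap 0 1 * Equiv.swap 0 2) (by intro i; fin_cases i <;> rfl)

theorem sum_mul_deltaSymm_tmat (hA : IsSym4 A) :
    ∑ i, ∑ j, ∑ k, ∑ l, A ![i, j, k, l] * deltaSymm (tmat A) i j k l =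
      3 * ∑ i, ∑ j, tmat A i j ^ 2 := by
  simp only [deltaSymm, mul_add, mul_ite, mul_zero, sum_add_distrib, sum_ite_irrel,
    sum_const_zero, sum_ite_eq, mem_univ, if_true]
  simp only [sum_comm_cycle (s := univ), ← sum_mul, hA.sum_apply_eq_tmat₀₁,
    hA.sum_apply_eq_tmat₀₂, hA.sum_apply_eq_tmat₀₃, ← sq]
  ring

theorem three_mul_sum_sq_tmat_le (hA : IsSym4 A) :
    3 * ∑ i, ∑ j, tmat A i j ^ 2 ≤ (N + 2) * sqnorm A := by
  set c : ℝ := N + 2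
  have hsq : 0 ≤ ∑ i, ∑ j, ∑ k, ∑ l, (c * A ![i, j, k, l] - deltaSymm (tmat A) i j k l) ^ 2 := by
    positivity
  have hexpand : ∑ i, ∑ j, ∑ k, ∑ l, (c * A ![i, j, k, l] - deltaSymm (tmat A) i j k l) ^ 2 =
      c * (c * sqnorm A - 3 * ∑ i, ∑ j, tmat A i j ^ 2) := by
    simp only [sub_sq, mul_pow, sum_add_distrib, sum_sub_distrib, ← mul_sum, mul_assoc,
      hA.sum_mul_deltaSymm_tmat, sum_deltaSymm_sq hA.tmat_comm, sqnorm, Fintype.card_fin]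
    ring
  have hc : 0 < c := by positivity
  nlinarith

theorem a0_eq_of_isFixedPoint (hA : IsSym4 A) (hfp : IsFixedPoint A) :
    a0 A = ∑ i, ∑ j, tmat A i j ^ 2 + 2 * sqnorm A := by
  have hcontract : ∑ i, ∑ j, ∑ m, ∑ n, A ![i, i, m, n] * A ![j, j, m, n] =
      ∑ m, ∑ n, tmat A m n ^ 2 := by
    simp only [sq, ← hA.sum_apply_eq_tmat₀₁, sum_mul_sum]
    rw [sum_comm_cycle]
    exact sum_congr rfl fun _ _ => sum_comm_cycle
  rw [a0, sum_congr rfl fun i _ => sum_congr rfl fun j _ => hfp i i j j]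
  simp only [sum_add_distrib, hcontract, sqnorm, ← sq]
  ring

end IsSym4

theorem sq_a0_le {N : ℕ} (A : (Fin 4 → Fin N) → ℝ) :
    a0 A ^ 2 ≤ N * ∑ i, ∑ j, tmat A i j ^ 2 :=
  calc a0 A ^ 2 = (∑ i, tmat A i i) ^ 2 := rfl
    _ ≤ N * ∑ i, tmat A i i ^ 2 := by
      simpa using sq_sum_le_card_mul_sum_sq (s := univ) (f := fun i => tmat A i i)
    _ ≤ N * ∑ i, ∑ j, tmat A i j ^ 2 := by
      gcongr with i
      exact single_le_sum (f := fun j => tmat A i j ^ 2) (fun _ _ => sq_nonneg _) (mem_univ i)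

theorem cubic_nonneg {n r : ℝ} (hn : 0 ≤ n) (hr : 3 ≤ r) (hnr : n ≤ 4 * (r - 9 / 8) ^ 2) :
    0 ≤ -n ^ 3 + (4 * r ^ 2 - 6 * r - 5) * n ^ 2 + (23 * r ^ 2 - 33 * r - 12) * n
      + (36 * r ^ 2 - 60 * r) := by
  -- `4r² − 6r − 5 − n ≥ 3r − 161/16`, as `4(r − 9/8)² = 4r² − 9r + 81/16`.
  have hlin : 0 ≤ (3 * r - 161 / 16) * n + 23 * r ^ 2 - 33 * r - 12 := by
    rcases le_total (3 * r) (161 / 16) with h | h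
    · nlinarith [mul_le_mul_of_nonpos_left hnr (by linarith : 3 * r - 161 / 16 ≤ 0)]
    · nlinarith
  nlinarith [mul_nonneg (sq_nonneg n) (sub_nonneg.2 hnr), mul_nonneg hn hlin]

variable {N r : ℕ}

theorem Sfun_sub_Sfun_right (x y y' : ℝ) :
    Sfun N r x y - Sfun N r x y' = (N + r) * (N + 17 - 7 * r) * (y - y') := by
  unfold Sfun; ring

theorem Sfun_on_line_le (hr : 3 ≤ r) {x : ℝ} (hx₀ : 0 ≤ x)
    (hx : x ≤ (N : ℝ) * ((N : ℝ) + 2) / ((N : ℝ) + 8)) :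
    Sfun N r x (3 * x / (N + 8)) ≤
      Sfun N r ((N : ℝ) * ((N : ℝ) + 2) / ((N : ℝ) + 8))
        (3 * (N : ℝ) * ((N : ℝ) + 2) / ((N : ℝ) + 8) ^ 2) := by
  have hr' : (3 : ℝ) ≤ r := by exact_mod_cast hr
  set xs : ℝ := N * (N + 2) / (N + 8)
  have key : Sfun N r xs (3 * N * (N + 2) / (N + 8) ^ 2) - Sfun N r x (3 * x / (N + 8)) =
      (xs - x) * ((r - 2) * (r - 3) * (xs + x)
        + (N + r) * (4 * r * N + 11 * r - 5 * N - 13) / (N + 8)) := by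
    simp only [xs, Sfun]; field_simp; ring
  have hbracket : 0 ≤ (r - 2) * (r - 3) * (xs + x)
      + (N + r) * (4 * r * N + 11 * r - 5 * N - 13) / (N + 8) := by
    have h₁ : 0 ≤ ((r : ℝ) - 2) * (r - 3) := by nlinarith
    have h₂ : 0 ≤ 4 * (r : ℝ) * N + 11 * r - 5 * N - 13 := by nlinarith
    have hxs : 0 ≤ xs := by positivity
    exact add_nonneg (mul_nonneg h₁ (add_nonneg hxs hx₀))
      (div_nonneg (mul_nonneg (by positivity) h₂) (by positivity))
  nlinarith [mul_nonneg (sub_nonneg.2 hx) hbracket]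

theorem Sfun_on_parabola_le (hr : 3 ≤ r) (hN : 0 < N) (hNr : (N : ℝ) ≤ 4 * ((r : ℝ) - 9 / 8) ^ 2)
    {x : ℝ} (hx₀ : 0 ≤ x) (hx : x ≤ (N : ℝ) * ((N : ℝ) + 2) / ((N : ℝ) + 8)) :
    Sfun N r x ((N * x - x ^ 2) / (2 * N)) ≤
      Sfun N r ((N : ℝ) * ((N : ℝ) + 2) / ((N : ℝ) + 8))
        (3 * (N : ℝ) * ((N : ℝ) + 2) / ((N : ℝ) + 8) ^ 2) := by
  have hr' : (3 : ℝ) ≤ r := by exact_mod_cast hr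
  have hN' : (0 : ℝ) < N := by exact_mod_cast hN
  set xs : ℝ := N * (N + 2) / (N + 8)
  set α : ℝ := (r - 2) * (r - 3) - (N + r) * (N + 17 - 7 * r) / (2 * N)
  set β : ℝ := (N + r) * (N + r + 1) / 2
  have key : Sfun N r xs (3 * N * (N + 2) / (N + 8) ^ 2) - Sfun N r x ((N * x - x ^ 2) / (2 * N)) =
      (xs - x) * (α * (xs + x) + β) := by
    simp only [xs, α, β, Sfun]; field_simp; ring
  -- the slope at `xs` of `x ↦ S(x, (Nx − x²)/(2N)) = αx² + βx`
  have hslope : 0 ≤ 2 * α * xs + β := by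
    have : 2 * α * xs + β = (-N ^ 3 + (4 * r ^ 2 - 6 * r - 5) * N ^ 2
        + (23 * r ^ 2 - 33 * r - 12) * N + (36 * r ^ 2 - 60 * r)) / (2 * (N + 8)) := by
      simp only [xs, α, β]; field_simp; ring
    rw [this]
    exact div_nonneg (cubic_nonneg hN'.le hr' hNr) (by positivity)
  have hβ : 0 ≤ β := by positivity
  have hlin : 0 ≤ α * (xs + x) + β := by
    rcases le_total 0 α with h | h
    · have : 0 ≤ xs := by positivity
      positivity
    · nlinarith [mul_le_mul_of_nonpos_left hx h]
  nlinarith [mul_nonneg (sub_nonneg.2 hx) hlin]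

theorem mem_Icc_of_feasible (hN : 0 < N) {x y : ℝ} (hlow : 3 * x / (N + 8) ≤ y)
    (hup : y ≤ (N * x - x ^ 2) / (2 * N)) :
    x ∈ Set.Icc 0 ((N : ℝ) * ((N : ℝ) + 2) / ((N : ℝ) + 8)) := by
  have hN' : (0 : ℝ) < N := by exact_mod_cast hN
  have hquad : x * ((N + 8) * x - N * (N + 2)) ≤ 0 := by
    have h := hlow.trans hup
    rw [div_le_div_iff₀ (by positivity) (by positivity)] at h
    nlinarith
  rcases mul_nonpos_iff.1 hquad with ⟨hx₀, hx⟩ | ⟨hx₀, hx⟩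
  · exact ⟨hx₀, by rw [le_div_iff₀ (by positivity)]; linarith⟩
  · nlinarith [mul_pos hN' (by linarith : (0 : ℝ) < N + 2)]

theorem Sfun_le_of_feasible (hr : 3 ≤ r) (hN : 0 < N)
    (hNr : (N : ℝ) ≤ 4 * ((r : ℝ) - 9 / 8) ^ 2) {x y : ℝ} (hlow : 3 * x / (N + 8) ≤ y)
    (hup : y ≤ (N * x - x ^ 2) / (2 * N)) :
    Sfun N r x y ≤
      Sfun N r ((N : ℝ) * ((N : ℝ) + 2) / ((N : ℝ) + 8))
        (3 * (N : ℝ) * ((N : ℝ) + 2) / ((N : ℝ) + 8) ^ 2) := by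
  obtain ⟨hx₀, hx⟩ := mem_Icc_of_feasible hN hlow hup
  have hNr₀ : (0 : ℝ) ≤ N + r := by positivity
  rcases le_total ((N : ℝ) + 17) (7 * r) with hc | hc
  · calc Sfun N r x y ≤ Sfun N r x (3 * x / (N + 8)) := by
          rw [← sub_nonpos, Sfun_sub_Sfun_right]
          exact mul_nonpos_of_nonpos_of_nonneg
            (mul_nonpos_of_nonneg_of_nonpos hNr₀ (by linarith)) (by linarith)
      _ ≤ _ := Sfun_on_line_le hr hx₀ hx
  · calc Sfun N r x y ≤ Sfun N r x ((N * x - x ^ 2) / (2 * N)) := by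
          rw [← sub_nonneg, Sfun_sub_Sfun_right]
          exact mul_nonneg (mul_nonneg hNr₀ (by linarith)) (by linarith)
      _ ≤ _ := Sfun_on_parabola_le hr hN hNr hx₀ hx

/-- for `r ≥ 3` and `2 ≤ N ≤ 4(r − 9/8)²`, every one-loop fixed
point `λ` satisfies `S_{N,r}(a₀(λ), ‖λ‖²) ≤ S_{N,r}(ρ_N⁺, 3N(N+2)/(N+8)²)`:
the average of the squared one-loop anomalous dimensions of rank-`r` composite
operators is maximized by the `O(N)` fixed point. -/
theorem Sfun_maximized_by_ON {N r : ℕ} (hr : 3 ≤ r) (hN : 2 ≤ N)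
    (hNr : (N : ℝ) ≤ 4 * ((r : ℝ) - 9 / 8) ^ 2)
    (A : (Fin 4 → Fin N) → ℝ) (hA : IsSym4 A) (hfp : IsFixedPoint A) :
    Sfun N r (a0 A) (sqnorm A) ≤
      Sfun N r ((N : ℝ) * ((N : ℝ) + 2) / ((N : ℝ) + 8))
        (3 * (N : ℝ) * ((N : ℝ) + 2) / ((N : ℝ) + 8) ^ 2) := by
  have hN₀ : 0 < N := by omega
  have hN' : (0 : ℝ) < N := by exact_mod_cast hN₀
  have ha₀ := hA.a0_eq_of_isFixedPoint hfp
  have hCS := sq_a0_le A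
  have htrace := hA.three_mul_sum_sq_tmat_le
  refine Sfun_le_of_feasible hr hN₀ hNr ?_ ?_
  · rw [div_le_iff₀ (by positivity)]
    linarith
  · rw [le_div_iff₀ (by positivity)]
    nlinarith
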